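/- arXiv:1105.0805 — 3 statements merged into one kernel-verified Lean document; each statement's English description precedes it below -/
import Mathlib

section
/- (Construction of ω^L from ω^H and Φ.) In the setting of a Lie group extension 1 → L → H →β K → 1, with S → M a principal H-bundle, R = S/L with connection ω^K, connection ω^H on S → M, and Higgs field Φ: S → Split(h,k): the l-valued one-form ω^L := ω^H − Φ(·)(π*ω^K) is an H-invariant connection on the principal L-bundle S → R. That is: (i) ω^L takes values in l; (ii) ω^L_s(ι^L_s(λ)) = λ for all λ ∈ l; (iii) R_h* ω^L = Ad(h⁻¹) ω^L for all h ∈ H. -/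
/-! Since `β ∘ Φ(s) = id` and `β ∘ ω^H = π*ω^K`, the correction `Φ(s) ∘ π*ω^K` is exactly the
`Φ(s)`-lift of the `k`-component of `ω^H`, so subtracting it lands in `l = ker β`; on vertical vectors
of `l` the correction vanishes because `π*ω^K` only sees their `β`-image. Equivariance holds term by
term: the `Ad(β h)` in the transformation law of `Φ` cancels the `Ad(β h)⁻¹` of `π*ω^K`. -/

section HiggsCorrection

variable {R V hV kV : Type*} [Ring R] [AddCommGroup V] [Module R V]
  [AddCommGroup hV] [Module R hV] [AddCommGroup kV] [Module R kV]

theorem sub_comp_apply_mem_ker_of_comp_eq_id {β : hV →ₗ[R] kV} {Φ : kV →ₗ[R] hV}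
    {ω : V →ₗ[R] hV} {θ : V →ₗ[R] kV} (hΦ : β ∘ₗ Φ = LinearMap.id) (hω : β ∘ₗ ω = θ) (v : V) :
    (ω - Φ ∘ₗ θ) v ∈ LinearMap.ker β := by
  have hβΦ : β (Φ (θ v)) = θ v := LinearMap.congr_fun hΦ (θ v)
  have hβω : β (ω v) = θ v := LinearMap.congr_fun hω v
  simp only [LinearMap.mem_ker, LinearMap.sub_apply, LinearMap.comp_apply, map_sub, hβΦ, hβω,
    sub_self]

theorem sub_comp_apply_of_mem_ker {β : hV →ₗ[R] kV} {Φ : kV →ₗ[R] hV} {ω : V →ₗ[R] hV}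
    {θ : V →ₗ[R] kV} {ι : hV →ₗ[R] V} (hω : ∀ η, ω (ι η) = η) (hθ : ∀ η, θ (ι η) = β η)
    {η : hV} (hη : η ∈ LinearMap.ker β) :
    (ω - Φ ∘ₗ θ) (ι η) = η := by
  rw [LinearMap.mem_ker] at hη
  simp [hω, hθ, hη]

theorem sub_comp_comp_eq_of_comp_eq {ω ω' : V →ₗ[R] hV} {θ θ' : V →ₗ[R] kV}
    {Φ Φ' : kV →ₗ[R] hV} {D : V →ₗ[R] V} {A : hV →ₗ[R] hV} {B B' : kV →ₗ[R] kV}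
    (hω : ω' ∘ₗ D = A ∘ₗ ω) (hθ : θ' ∘ₗ D = B' ∘ₗ θ) (hΦ : Φ' = A ∘ₗ Φ ∘ₗ B)
    (hB : B ∘ₗ B' = LinearMap.id) :
    (ω' - Φ' ∘ₗ θ') ∘ₗ D = A ∘ₗ (ω - Φ ∘ₗ θ) := by
  rw [LinearMap.sub_comp, LinearMap.comp_assoc, hω, hθ, hΦ, LinearMap.comp_sub]
  simp only [LinearMap.comp_assoc]
  rw [← LinearMap.comp_assoc θ B' B, hB, LinearMap.id_comp]

end HiggsCorrection

theorem LinearEquiv.toLinearMap_comp_map_inv {G R M : Type*} [Group G] [Semiring R]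
    [AddCommMonoid M] [Module R M] (ρ : G →* (M ≃ₗ[R] M)) (g : G) :
    (ρ g).toLinearMap ∘ₗ (ρ g⁻¹).toLinearMap = LinearMap.id := by
  rw [← Module.End.mul_eq_comp, ← LinearEquiv.coe_toLinearMap_mul, ← map_mul, mul_inv_cancel,
    map_one, LinearEquiv.coe_toLinearMap_one]

theorem omegaL_is_H_invariant_connection_general
    {H K hV kV S : Type*} [Group H] [Group K]
    [AddCommGroup hV] [Module ℝ hV] [AddCommGroup kV] [Module ℝ kV]
    {V : Type*} [AddCommGroup V] [Module ℝ V]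
    (βG : H →* K)
    (β : hV →ₗ[ℝ] kV)
    (Ad : H →* (hV ≃ₗ[ℝ] hV)) (AdK : K →* (kV ≃ₗ[ℝ] kV))
    (act : S → H → S)
    (D : H → S → (V →ₗ[ℝ] V))
    (ι : S → (hV →ₗ[ℝ] V))
    -- the pullback `π*ω^K`
    (πωK : S → (V →ₗ[ℝ] kV))
    (hπωKfund : ∀ (s : S) (η : hV), πωK s (ι s η) = β η)
    (hπωKequiv : ∀ (h : H) (s : S),
      πωK (act s h) ∘ₗ D h s = (AdK (βG h)⁻¹).toLinearMap ∘ₗ πωK s)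
    -- `ω^H`: a connection on `S → M` projecting to `ω^K`
    (ωH : S → (V →ₗ[ℝ] hV))
    (hωHfund : ∀ (s : S) (η : hV), ωH s (ι s η) = η)
    (hωHequiv : ∀ (h : H) (s : S),
      ωH (act s h) ∘ₗ D h s = (Ad h⁻¹).toLinearMap ∘ₗ ωH s)
    (hωHproj : ∀ s, β ∘ₗ ωH s = πωK s)
    -- the Higgs field `Φ`
    (Φ : S → (kV →ₗ[ℝ] hV))
    (hΦsplit : ∀ s, β ∘ₗ Φ s = LinearMap.id)
    (hΦhiggs : ∀ s h, Φ (act s h)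
      = (Ad h⁻¹).toLinearMap ∘ₗ Φ s ∘ₗ (AdK (βG h)).toLinearMap)
    -- `ω^L := ω^H − Φ(·)(π*ω^K)`
    (ωL : S → (V →ₗ[ℝ] hV))
    (hωL : ∀ s, ωL s = ωH s - Φ s ∘ₗ πωK s) :
    (∀ s v, ωL s v ∈ LinearMap.ker β) ∧
    (∀ s, ∀ lam ∈ LinearMap.ker β, ωL s (ι s lam) = lam) ∧
    (∀ (h : H) (s : S),
      ωL (act s h) ∘ₗ D h s = (Ad h⁻¹).toLinearMap ∘ₗ ωL s) := by
  refine ⟨fun s v => ?_, fun s lam hlam => ?_, fun h s => ?_⟩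
  · rw [hωL]
    exact sub_comp_apply_mem_ker_of_comp_eq_id (hΦsplit s) (hωHproj s) v
  · rw [hωL]
    exact sub_comp_apply_of_mem_ker (hωHfund s) (hπωKfund s) hlam
  · rw [hωL, hωL]
    exact sub_comp_comp_eq_of_comp_eq (hωHequiv h s) (hπωKequiv h s) (hΦhiggs s h)
      (LinearEquiv.toLinearMap_comp_map_inv AdK (βG h))

/-- Construction of `ω^L := ω^H − Φ(·)(π*ω^K)` from a connection `ω^H`
on the principal `H`-bundle `S → M` (projecting to `ω^K`) and a Higgs field `Φ`:
`ω^L` is `l = ker β`-valued, reproduces fundamental vector fields of `l`, and is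
`H`-invariant. -/
theorem omegaL_is_H_invariant_connection
    {H K hV kV S : Type*} [Group H] [Group K]
    [AddCommGroup hV] [Module ℝ hV] [AddCommGroup kV] [Module ℝ kV]
    {V : Type*} [AddCommGroup V] [Module ℝ V]
    (βG : H →* K) (hβGsurj : Function.Surjective βG)
    (β : hV →ₗ[ℝ] kV) (hβsurj : Function.Surjective β)
    (Ad : H →* (hV ≃ₗ[ℝ] hV)) (AdK : K →* (kV ≃ₗ[ℝ] kV))
    (hequiv : ∀ h : H, β ∘ₗ (Ad h).toLinearMap = (AdK (βG h)).toLinearMap ∘ₗ β)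
    (act : S → H → S)
    (hact_one : ∀ s, act s 1 = s)
    (hact_mul : ∀ s h₁ h₂, act (act s h₁) h₂ = act s (h₁ * h₂))
    (hfree : ∀ s h, act s h = s → h = 1)
    (D : H → S → (V →ₗ[ℝ] V))
    (hD1 : ∀ s, D 1 s = LinearMap.id)
    (hDmul : ∀ h₁ h₂ s, D (h₁ * h₂) s = D h₂ (act s h₁) ∘ₗ D h₁ s)
    (ι : S → (hV →ₗ[ℝ] V))
    (hιequiv : ∀ (h : H) (s : S) (η : hV),
      D h s (ι s η) = ι (act s h) (Ad h⁻¹ η))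
    -- the pullback `π*ω^K`
    (πωK : S → (V →ₗ[ℝ] kV))
    (hπωKfund : ∀ (s : S) (η : hV), πωK s (ι s η) = β η)
    (hπωKequiv : ∀ (h : H) (s : S),
      πωK (act s h) ∘ₗ D h s = (AdK (βG h)⁻¹).toLinearMap ∘ₗ πωK s)
    -- `ω^H`: a connection on `S → M` projecting to `ω^K`
    (ωH : S → (V →ₗ[ℝ] hV))
    (hωHfund : ∀ (s : S) (η : hV), ωH s (ι s η) = η)
    (hωHequiv : ∀ (h : H) (s : S),
      ωH (act s h) ∘ₗ D h s = (Ad h⁻¹).toLinearMap ∘ₗ ωH s)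
    (hωHproj : ∀ s, β ∘ₗ ωH s = πωK s)
    -- the Higgs field `Φ`
    (Φ : S → (kV →ₗ[ℝ] hV))
    (hΦsplit : ∀ s, β ∘ₗ Φ s = LinearMap.id)
    (hΦhiggs : ∀ s h, Φ (act s h)
      = (Ad h⁻¹).toLinearMap ∘ₗ Φ s ∘ₗ (AdK (βG h)).toLinearMap)
    -- `ω^L := ω^H − Φ(·)(π*ω^K)`
    (ωL : S → (V →ₗ[ℝ] hV))
    (hωL : ∀ s, ωL s = ωH s - Φ s ∘ₗ πωK s) :
    (∀ s v, ωL s v ∈ LinearMap.ker β) ∧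
    (∀ s, ∀ lam ∈ LinearMap.ker β, ωL s (ι s lam) = lam) ∧
    (∀ (h : H) (s : S),
      ωL (act s h) ∘ₗ D h s = (Ad h⁻¹).toLinearMap ∘ₗ ωL s) :=
  omegaL_is_H_invariant_connection_general βG β Ad AdK act D ι πωK hπωKfund hπωKequiv ωH hωHfund
    hωHequiv hωHproj Φ hΦsplit hΦhiggs ωL hωL
end

section
/- (The induced Higgs field transforms correctly.) Let ω^L be an H-invariant connection on the H-equivariant principal L-bundle T → R where R is a principal K-bundle over M. For t ∈ T and κ ∈ k, define Φ(t)(κ) ∈ h by the condition that the fundamental vector field ι^H_t(Φ(t)(κ)) equals the ω^L-horizontal lift of the fundamental vector field ι^K_{π(t)}(κ). Then Φ(t) is a right splitting, β(Φ(t)(κ)) = κ, and Φ satisfies the Higgs field equivariance Φ(th) = Ad(h⁻¹) ∘ Φ(t) ∘ Ad(β(h)) for all h ∈ H. -/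
/-!
Both `Φ (t h) κ` and `Ad(h⁻¹) (Φ t (Ad(β h) κ))` are `ω^L`-horizontal at `t h` (the second because
`ι` and `ω^L` are `H`-equivariant) and both project to `κ` under `β` (because `β` intertwines the
adjoint actions), so they agree by uniqueness of horizontal lifts.
-/

section HiggsField

variable {H K hV kV T V : Type*} [Group H] [Group K]
  [AddCommGroup hV] [Module ℝ hV] [AddCommGroup kV] [Module ℝ kV] [AddCommGroup V] [Module ℝ V]

theorem intertwiner_ad_inv_apply (βG : H →* K) (β : hV →ₗ[ℝ] kV)
    (Ad : H →* (hV ≃ₗ[ℝ] hV)) (AdK : K →* (kV ≃ₗ[ℝ] kV))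
    (hequiv : ∀ h : H, β ∘ₗ (Ad h).toLinearMap = (AdK (βG h)).toLinearMap ∘ₗ β)
    (h : H) (η : hV) :
    β (Ad h⁻¹ η) = (AdK (βG h)).symm (β η) := by
  have := LinearMap.congr_fun (hequiv h⁻¹) η
  simpa only [LinearMap.coe_comp, Function.comp_apply, LinearEquiv.coe_coe, map_inv,
    LinearEquiv.coe_inv] using this

theorem connection_fundamental_act_eq_zero (act : T → H → T) (D : H → T → (V →ₗ[ℝ] V)) (ι : T → (hV →ₗ[ℝ] V))
    (Ad : H →* (hV ≃ₗ[ℝ] hV)) (ωL : T → (V →ₗ[ℝ] hV))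
    (hιequiv : ∀ (h : H) (t : T) (η : hV), D h t (ι t η) = ι (act t h) (Ad h⁻¹ η))
    (hωLequiv : ∀ (h : H) (t : T), ωL (act t h) ∘ₗ D h t = (Ad h⁻¹).toLinearMap ∘ₗ ωL t)
    {t : T} {η : hV} (h : H) (hη : ωL t (ι t η) = 0) :
    ωL (act t h) (ι (act t h) (Ad h⁻¹ η)) = 0 := by
  rw [← hιequiv]
  calc ωL (act t h) (D h t (ι t η)) = Ad h⁻¹ (ωL t (ι t η)) :=
        LinearMap.congr_fun (hωLequiv h t) _
    _ = 0 := by rw [hη, map_zero]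

end HiggsField

theorem induced_higgs_field_equivariance_general
    {H K hV kV T : Type*} [Group H] [Group K]
    [AddCommGroup hV] [Module ℝ hV] [AddCommGroup kV] [Module ℝ kV]
    {V : Type*} [AddCommGroup V] [Module ℝ V]
    (βG : H →* K)
    (β : hV →ₗ[ℝ] kV)
    (Ad : H →* (hV ≃ₗ[ℝ] hV)) (AdK : K →* (kV ≃ₗ[ℝ] kV))
    (hequiv : ∀ h : H, β ∘ₗ (Ad h).toLinearMap = (AdK (βG h)).toLinearMap ∘ₗ β)
    -- `T` with free right `H`-action extending the `L`-action
    (act : T → H → T)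
    (D : H → T → (V →ₗ[ℝ] V))
    (ι : T → (hV →ₗ[ℝ] V))
    (hιequiv : ∀ (h : H) (t : T) (η : hV),
      D h t (ι t η) = ι (act t h) (Ad h⁻¹ η))
    -- `ω^L`: `H`-invariant connection on `T → R`
    (ωL : T → (V →ₗ[ℝ] hV))
    (hωLequiv : ∀ (h : H) (t : T),
      ωL (act t h) ∘ₗ D h t = (Ad h⁻¹).toLinearMap ∘ₗ ωL t)
    -- uniqueness of horizontal lifts (from freeness of the actions)
    (huniq : ∀ (t : T) (η η' : hV), ωL t (ι t η) = 0 → ωL t (ι t η') = 0 →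
      β η = β η' → η = η')
    -- `Φ` defined by the horizontal-lift condition
    (Φ : T → (kV →ₗ[ℝ] hV))
    (hΦhoriz : ∀ (t : T) (κ : kV), ωL t (ι t (Φ t κ)) = 0)
    (hΦproj : ∀ (t : T) (κ : kV), β (Φ t κ) = κ) :
    (∀ t, β ∘ₗ Φ t = LinearMap.id) ∧
    (∀ (t : T) (h : H), Φ (act t h)
      = (Ad h⁻¹).toLinearMap ∘ₗ Φ t ∘ₗ (AdK (βG h)).toLinearMap) := by
  refine ⟨fun t => LinearMap.ext (hΦproj t), fun t h => LinearMap.ext fun κ => ?_⟩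
  apply huniq (act t h) _ _ (hΦhoriz _ κ)
  · exact connection_fundamental_act_eq_zero act D ι Ad ωL hιequiv hωLequiv h (hΦhoriz t _)
  · simp only [LinearMap.coe_comp, Function.comp_apply, LinearEquiv.coe_coe,
      intertwiner_ad_inv_apply βG β Ad AdK hequiv, hΦproj, LinearEquiv.symm_apply_apply]

/-- The Higgs field induced by an `H`-invariant connection `ω^L` on the
`H`-equivariant `L`-bundle `T → R` — defined by `ι^H_t(Φ(t)(κ)) = ` the `ω^L`-horizontal
lift of `ι^K_{π(t)}(κ)`, i.e. `Φ(t)(κ)` is `ω^L`-horizontal and `β(Φ(t)(κ)) = κ` —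
is a right splitting and transforms as `Φ(th) = Ad(h⁻¹) ∘ Φ(t) ∘ Ad(β(h))`. -/
theorem induced_higgs_field_equivariance
    {H K hV kV T : Type*} [Group H] [Group K]
    [AddCommGroup hV] [Module ℝ hV] [AddCommGroup kV] [Module ℝ kV]
    {V : Type*} [AddCommGroup V] [Module ℝ V]
    (βG : H →* K) (hβGsurj : Function.Surjective βG)
    (β : hV →ₗ[ℝ] kV) (hβsurj : Function.Surjective β)
    (Ad : H →* (hV ≃ₗ[ℝ] hV)) (AdK : K →* (kV ≃ₗ[ℝ] kV))
    (hequiv : ∀ h : H, β ∘ₗ (Ad h).toLinearMap = (AdK (βG h)).toLinearMap ∘ₗ β)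
    -- `T` with free right `H`-action extending the `L`-action
    (act : T → H → T)
    (hact_one : ∀ t, act t 1 = t)
    (hact_mul : ∀ t h₁ h₂, act (act t h₁) h₂ = act t (h₁ * h₂))
    (hfree : ∀ t h, act t h = t → h = 1)
    (D : H → T → (V →ₗ[ℝ] V))
    (hD1 : ∀ t, D 1 t = LinearMap.id)
    (hDmul : ∀ h₁ h₂ t, D (h₁ * h₂) t = D h₂ (act t h₁) ∘ₗ D h₁ t)
    (ι : T → (hV →ₗ[ℝ] V))
    (hιequiv : ∀ (h : H) (t : T) (η : hV),
      D h t (ι t η) = ι (act t h) (Ad h⁻¹ η))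
    -- `ω^L`: `H`-invariant connection on `T → R`
    (ωL : T → (V →ₗ[ℝ] hV))
    (hωLval : ∀ t v, ωL t v ∈ LinearMap.ker β)
    (hωLfund : ∀ t, ∀ lam ∈ LinearMap.ker β, ωL t (ι t lam) = lam)
    (hωLequiv : ∀ (h : H) (t : T),
      ωL (act t h) ∘ₗ D h t = (Ad h⁻¹).toLinearMap ∘ₗ ωL t)
    -- uniqueness of horizontal lifts (from freeness of the actions)
    (huniq : ∀ (t : T) (η η' : hV), ωL t (ι t η) = 0 → ωL t (ι t η') = 0 →
      β η = β η' → η = η')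
    -- `Φ` defined by the horizontal-lift condition
    (Φ : T → (kV →ₗ[ℝ] hV))
    (hΦhoriz : ∀ (t : T) (κ : kV), ωL t (ι t (Φ t κ)) = 0)
    (hΦproj : ∀ (t : T) (κ : kV), β (Φ t κ) = κ) :
    (∀ t, β ∘ₗ Φ t = LinearMap.id) ∧
    (∀ (t : T) (h : H), Φ (act t h)
      = (Ad h⁻¹).toLinearMap ∘ₗ Φ t ∘ₗ (AdK (βG h)).toLinearMap) :=
  induced_higgs_field_equivariance_general βG β Ad AdK hequiv act D ι hιequiv ωL hωLequiv huniq Φ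
    hΦhoriz hΦproj
end

section
/- (Equivariance of the caloron one-form under Aut(Q).) Let P be a manifold with free right Aut(Q)-action, A an Aut(Q)-connection one-form on P with values in Lie(Aut(Q)) = Γ_G(Q,TQ) (G-equivariant vector fields on Q), and Φ: P → 𝒜 a Higgs field valued in connection one-forms on Q satisfying Φ(pψ) = ψ*Φ(p). Define the g-valued one-form on P × Q by ω̃_{(p,q)}(ξ,ζ) = Φ(p)_q(A_p(ξ)(q) + ζ). Then ω̃ is invariant under the diagonal right Aut(Q)-action (ψ acting on P by the bundle action and on Q by ψ⁻¹): R_ψ* ω̃ = ω̃. -/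
/-! Equivariance of `A` turns `A_{pψ}(R_ψ ξ)` at `ψ⁻¹ q` into `D ψ⁻¹` of `A_p(ξ)(q)`, so the whole
argument of `Φ(pψ)` is the pushforward by `ψ⁻¹` of `A_p(ξ)(q) + ζ`. Since `Φ(pψ) = ψ*Φ(p)`
applies `D ψ` to it, the cocycle identity `D ψ ∘ D ψ⁻¹ = D 1 = id` leaves `Φ(p)_q(A_p(ξ)(q) + ζ)`. -/

section Cocycle

variable {Ψ Q : Type*} [Group Ψ]

theorem MonoidHom.perm_apply_inv_apply (a : Ψ →* Equiv.Perm Q) (ψ : Ψ) (q : Q) :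
    a ψ (a ψ⁻¹ q) = q := by
  rw [map_inv]
  exact (a ψ).apply_symm_apply q

theorem cocycle_apply_inv_apply {R W : Type*} [Semiring R] [AddCommMonoid W] [Module R W]
    (a : Ψ →* Equiv.Perm Q) {D : Ψ → Q → W →ₗ[R] W} (hD1 : ∀ q, D 1 q = LinearMap.id)
    (hDmul : ∀ ψ₁ ψ₂ q, D (ψ₁ * ψ₂) q = D ψ₁ (a ψ₂ q) ∘ₗ D ψ₂ q) (ψ : Ψ) (q : Q) (v : W) :
    D ψ (a ψ⁻¹ q) (D ψ⁻¹ q v) = v := by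
  rw [← LinearMap.comp_apply, ← hDmul, mul_inv_cancel, hD1, LinearMap.id_apply]

end Cocycle

theorem caloron_form_aut_invariant_general
    {Ψ Q P : Type*} [Group Ψ]
    {W U gV : Type*} [AddCommGroup W] [Module ℝ W]
    [AddCommGroup U] [Module ℝ U] [AddCommGroup gV] [Module ℝ gV]
    -- the action of `Aut(Q)` on `Q` and its pushforward data
    (a : Ψ →* Equiv.Perm Q)
    (D : Ψ → Q → (W →ₗ[ℝ] W))
    (hD1 : ∀ q, D 1 q = LinearMap.id)
    (hDmul : ∀ ψ₁ ψ₂ q, D (ψ₁ * ψ₂) q = D ψ₁ (a ψ₂ q) ∘ₗ D ψ₂ q)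
    -- the free right `Aut(Q)`-action on `P` and its pushforward data
    (actP : P → Ψ → P)
    (DR : Ψ → P → (U →ₗ[ℝ] U))
    -- `A`: a connection one-form valued in `Lie(Aut Q) = Γ_G(Q,TQ)` (vector fields)
    (A : P → (U →ₗ[ℝ] (Q → W)))
    (hAconn : ∀ (ψ : Ψ) (p : P) (ξ : U) (q : Q),
      A (actP p ψ) (DR ψ p ξ) q = D ψ⁻¹ (a ψ q) (A p ξ (a ψ q)))
    -- `Φ`: a Higgs field valued in connection one-forms on `Q`, `Φ(pψ) = ψ*Φ(p)`
    (Φ : P → Q → (W →ₗ[ℝ] gV))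
    (hΦ : ∀ (ψ : Ψ) (p : P) (q : Q),
      Φ (actP p ψ) q = Φ p (a ψ q) ∘ₗ D ψ q) :
    ∀ (ψ : Ψ) (p : P) (q : Q) (ξ : U) (ζ : W),
      Φ (actP p ψ) (a ψ⁻¹ q)
          (A (actP p ψ) (DR ψ p ξ) (a ψ⁻¹ q) + D ψ⁻¹ q ζ)
        = Φ p q (A p ξ q + ζ) := by
  intro ψ p q ξ ζ
  rw [hΦ, hAconn, MonoidHom.perm_apply_inv_apply, LinearMap.comp_apply, ← map_add,
    cocycle_apply_inv_apply a hD1 hDmul]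

/-- Equivariance of the caloron one-form under `Aut(Q)`. With
`ω̃_{(p,q)}(ξ,ζ) = Φ(p)_q(A_p(ξ)(q) + ζ)`, the diagonal right `Aut(Q)`-action
(`ψ` acting on `P` by the bundle action and on `Q` by `ψ⁻¹`) satisfies
`R_ψ* ω̃ = ω̃`. Tangent spaces of `Q` and `P` are trivialized by `W` and `U`. -/
theorem caloron_form_aut_invariant
    {Ψ Q P : Type*} [Group Ψ]
    {W U gV : Type*} [AddCommGroup W] [Module ℝ W]
    [AddCommGroup U] [Module ℝ U] [AddCommGroup gV] [Module ℝ gV]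
    -- the action of `Aut(Q)` on `Q` and its pushforward data
    (a : Ψ →* Equiv.Perm Q)
    (D : Ψ → Q → (W →ₗ[ℝ] W))
    (hD1 : ∀ q, D 1 q = LinearMap.id)
    (hDmul : ∀ ψ₁ ψ₂ q, D (ψ₁ * ψ₂) q = D ψ₁ (a ψ₂ q) ∘ₗ D ψ₂ q)
    -- the free right `Aut(Q)`-action on `P` and its pushforward data
    (actP : P → Ψ → P)
    (hactP_one : ∀ p, actP p 1 = p)
    (hactP_mul : ∀ p ψ₁ ψ₂, actP (actP p ψ₁) ψ₂ = actP p (ψ₁ * ψ₂))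
    (hfree : ∀ p ψ, actP p ψ = p → ψ = 1)
    (DR : Ψ → P → (U →ₗ[ℝ] U))
    -- `A`: a connection one-form valued in `Lie(Aut Q) = Γ_G(Q,TQ)` (vector fields)
    (A : P → (U →ₗ[ℝ] (Q → W)))
    (hAconn : ∀ (ψ : Ψ) (p : P) (ξ : U) (q : Q),
      A (actP p ψ) (DR ψ p ξ) q = D ψ⁻¹ (a ψ q) (A p ξ (a ψ q)))
    -- `Φ`: a Higgs field valued in connection one-forms on `Q`, `Φ(pψ) = ψ*Φ(p)`
    (Φ : P → Q → (W →ₗ[ℝ] gV))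
    (hΦ : ∀ (ψ : Ψ) (p : P) (q : Q),
      Φ (actP p ψ) q = Φ p (a ψ q) ∘ₗ D ψ q) :
    ∀ (ψ : Ψ) (p : P) (q : Q) (ξ : U) (ζ : W),
      Φ (actP p ψ) (a ψ⁻¹ q)
          (A (actP p ψ) (DR ψ p ξ) (a ψ⁻¹ q) + D ψ⁻¹ q ζ)
        = Φ p q (A p ξ q + ζ) :=
  caloron_form_aut_invariant_general a D hD1 hDmul actP DR A hAconn Φ hΦ
end
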